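/- arXiv:1901.08669 — 5 statements merged into one kernel-verified Lean document; each statement's English description precedes it below -/
import Mathlib

section
/- Let p be a proper sampling on [n], θ = (θ_C)_{C⊆[n]} a family of vectors in ℝ^n, λ_i > 0 and σ_i ≥ 0 for all i, and let f_1,…,f_n : ℝ^d → ℝ be differentiable. Fix x, x* ∈ ℝ^d and vectors J_1,…,J_n ∈ ℝ^d, and for each C̃ ⊆ [n] define J⁺(C̃)_i := ∇f_i(x) if i ∈ C̃ and J⁺(C̃)_i := J_i otherwise. Then ∑_{C⊆[n]} ∑_{C̃⊆[n]} p_C p_{C̃} |C| ∑_{i∈C} σ_i (θ_C^i λ_i)^2 ‖J⁺(C̃)_i − ∇f_i(x*)‖^2 ≤ ∑_{C⊆[n]} p_C |C| ∑_{i∈C} (1−p_i) σ_i (θ_C^i λ_i)^2 ‖J_i − ∇f_i(x*)‖^2 + ∑_{i=1}^n σ_i p_i β_i λ_i^2 ‖∇f_i(x) − ∇f_i(x*)‖^2, where β_i := ∑_{C: i∈C} p_C |C| (θ_C^i)^2. -/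
/-- one-step bound for the Jacobian part of the stochastic
Lyapunov function (Lemma on `J^{k+1}`). -/
theorem stmt_4 (n d : ℕ) (f : Fin n → EuclideanSpace ℝ (Fin d) → ℝ)
    (hf : ∀ i, Differentiable ℝ (f i))
    (lam : Fin n → ℝ) (hlam : ∀ i, 0 < lam i)
    (σ : Fin n → ℝ) (hσ : ∀ i, 0 ≤ σ i)
    (p : Finset (Fin n) → ℝ) (hp0 : ∀ C, 0 ≤ p C) (hp1 : ∑ C : Finset (Fin n), p C = 1)
    (pI : Fin n → ℝ) (hpI : ∀ i, pI i = ∑ C ∈ Finset.univ.filter (fun C => i ∈ C), p C)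
    (hproper : ∀ i, 0 < pI i)
    (θ : Finset (Fin n) → Fin n → ℝ)
    (β : Fin n → ℝ)
    (hβ : ∀ i, β i = ∑ C ∈ Finset.univ.filter (fun C => i ∈ C),
        p C * (C.card : ℝ) * (θ C i) ^ 2)
    (x xstar : EuclideanSpace ℝ (Fin d)) (J : Fin n → EuclideanSpace ℝ (Fin d)) :
    ∑ C : Finset (Fin n), ∑ C' : Finset (Fin n),
        p C * p C' * (C.card : ℝ) *
          ∑ i ∈ C, σ i * (θ C i * lam i) ^ 2 *
            ‖(if i ∈ C' then gradient (f i) x else J i) - gradient (f i) xstar‖ ^ 2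
      ≤ (∑ C : Finset (Fin n),
            p C * (C.card : ℝ) *
              ∑ i ∈ C, (1 - pI i) * σ i * (θ C i * lam i) ^ 2 *
                ‖J i - gradient (f i) xstar‖ ^ 2)
        + ∑ i, σ i * pI i * β i * (lam i) ^ 2 *
            ‖gradient (f i) x - gradient (f i) xstar‖ ^ 2 := by
  set A : Fin n → ℝ := fun i => ‖gradient (f i) x - gradient (f i) xstar‖ ^ 2 with hA
  set B : Fin n → ℝ := fun i => ‖J i - gradient (f i) xstar‖ ^ 2 with hB
  have key : ∀ i : Fin n,
      ∑ C' : Finset (Fin n), p C' * (if i ∈ C' then A i else B i)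
        = pI i * A i + (1 - pI i) * B i := by
    intro i
    have hsplit := Finset.sum_filter_add_sum_filter_not Finset.univ (fun C => i ∈ C)
      (fun C => p C * (if i ∈ C then A i else B i))
    have h1 : ∑ C ∈ Finset.univ.filter (fun C => i ∈ C),
        p C * (if i ∈ C then A i else B i) = pI i * A i := by
      rw [hpI, Finset.sum_mul]
      refine Finset.sum_congr rfl (fun C hC => ?_)
      simp only [Finset.mem_filter] at hC
      simp [hC.2]
    have h2 : ∑ C ∈ Finset.univ.filter (fun C => ¬ i ∈ C),
        p C * (if i ∈ C then A i else B i) = (1 - pI i) * B i := by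
      have hc : (1 - pI i) = ∑ C ∈ Finset.univ.filter (fun C => ¬ i ∈ C), p C := by
        rw [hpI, ← hp1,
          ← Finset.sum_filter_add_sum_filter_not Finset.univ (fun C => i ∈ C) p]
        ring
      rw [hc, Finset.sum_mul]
      refine Finset.sum_congr rfl (fun C hC => ?_)
      simp only [Finset.mem_filter] at hC
      simp [hC.2]
    rw [← hsplit, h1, h2]
  have lhs_eq : (∑ C : Finset (Fin n), ∑ C' : Finset (Fin n),
        p C * p C' * (C.card : ℝ) *
          ∑ i ∈ C, σ i * (θ C i * lam i) ^ 2 *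
            (if i ∈ C' then A i else B i))
      = ∑ C : Finset (Fin n), p C * (C.card : ℝ) *
          ∑ i ∈ C, σ i * (θ C i * lam i) ^ 2 * (pI i * A i + (1 - pI i) * B i) := by
    refine Finset.sum_congr rfl (fun C _ => ?_)
    rw [Finset.mul_sum]
    have h1 : ∀ C' ∈ (Finset.univ : Finset (Finset (Fin n))),
        p C * p C' * (C.card : ℝ) *
          ∑ i ∈ C, σ i * (θ C i * lam i) ^ 2 * (if i ∈ C' then A i else B i)
        = ∑ i ∈ C, p C * (C.card : ℝ) * (σ i * (θ C i * lam i) ^ 2 *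
            (p C' * (if i ∈ C' then A i else B i))) := by
      intro C' _
      rw [Finset.mul_sum]
      exact Finset.sum_congr rfl (fun i _ => by ring)
    rw [Finset.sum_congr rfl h1, Finset.sum_comm]
    refine Finset.sum_congr rfl (fun i _ => ?_)
    rw [← Finset.mul_sum, ← Finset.mul_sum, key i]
  have goal_eq : (∑ C : Finset (Fin n), p C * (C.card : ℝ) *
          ∑ i ∈ C, σ i * (θ C i * lam i) ^ 2 * (pI i * A i + (1 - pI i) * B i))
      = (∑ C : Finset (Fin n), p C * (C.card : ℝ) *
            ∑ i ∈ C, (1 - pI i) * σ i * (θ C i * lam i) ^ 2 * B i)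
        + ∑ i, σ i * pI i * β i * (lam i) ^ 2 * A i := by
    have split : ∀ C : Finset (Fin n),
        p C * (C.card : ℝ) *
          ∑ i ∈ C, σ i * (θ C i * lam i) ^ 2 * (pI i * A i + (1 - pI i) * B i)
        = (p C * (C.card : ℝ) *
            ∑ i ∈ C, (1 - pI i) * σ i * (θ C i * lam i) ^ 2 * B i)
          + ∑ i ∈ C, p C * (C.card : ℝ) * (θ C i) ^ 2 *
              (σ i * pI i * (lam i) ^ 2 * A i) := by
      intro C
      rw [Finset.mul_sum, Finset.mul_sum, ← Finset.sum_add_distrib]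
      refine Finset.sum_congr rfl (fun i _ => ?_)
      ring
    rw [Finset.sum_congr rfl (fun C _ => split C), Finset.sum_add_distrib]
    congr 1
    have : ∀ C : Finset (Fin n), (∑ i ∈ C, p C * (C.card : ℝ) * (θ C i) ^ 2 *
          (σ i * pI i * (lam i) ^ 2 * A i))
        = ∑ i : Fin n, (if i ∈ C then p C * (C.card : ℝ) * (θ C i) ^ 2 *
          (σ i * pI i * (lam i) ^ 2 * A i) else 0) := by
      intro C
      rw [Finset.sum_ite_mem, Finset.univ_inter]
    rw [Finset.sum_congr rfl (fun C _ => this C), Finset.sum_comm]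
    refine Finset.sum_congr rfl (fun i _ => ?_)
    rw [hβ, ← Finset.sum_filter, Finset.mul_sum, Finset.sum_mul, Finset.sum_mul]
    refine Finset.sum_congr rfl (fun C _ => ?_)
    ring
  calc ∑ C : Finset (Fin n), ∑ C' : Finset (Fin n),
        p C * p C' * (C.card : ℝ) *
          ∑ i ∈ C, σ i * (θ C i * lam i) ^ 2 *
            ‖(if i ∈ C' then gradient (f i) x else J i) - gradient (f i) xstar‖ ^ 2
      = ∑ C : Finset (Fin n), ∑ C' : Finset (Fin n),
        p C * p C' * (C.card : ℝ) *
          ∑ i ∈ C, σ i * (θ C i * lam i) ^ 2 * (if i ∈ C' then A i else B i) := by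
        refine Finset.sum_congr rfl (fun C _ => Finset.sum_congr rfl (fun C' _ => ?_))
        congr 1
        refine Finset.sum_congr rfl (fun i _ => ?_)
        by_cases h : i ∈ C' <;> simp [h, hA, hB]
    _ ≤ _ := by rw [lhs_eq, goal_eq]
end

section
/- Let f_1,…,f_n : ℝ^d → ℝ be differentiable, λ_i > 0 for all i, p a proper sampling on [n], and θ = (θ_C)_{C⊆[n]} a bias-correcting family (∑_{C: i∈C} p_C θ_C^i = 1 for all i). Fix x ∈ ℝ^d and a point x* ∈ ℝ^d with ∑_{i=1}^n λ_i ∇f_i(x*) = 0, and vectors J_1,…,J_n ∈ ℝ^d. Define g(C) := ∑_{i=1}^n λ_i J_i + ∑_{i∈C} λ_i θ_C^i (∇f_i(x) − J_i). Then ∑_{C⊆[n]} p_C ‖g(C)‖^2 ≤ 2 ∑_{C⊆[n]} p_C |C| ∑_{i∈C} (θ_C^i λ_i)^2 ‖J_i − ∇f_i(x*)‖^2 + 2 ∑_{i=1}^n β_i λ_i^2 ‖∇f_i(x) − ∇f_i(x*)‖^2, where β_i := ∑_{C: i∈C} p_C |C| (θ_C^i)^2. -/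
/-!
Write `w i = J i - ∇fᵢ(x*)` and `v i = ∇fᵢ(x) - ∇fᵢ(x*)`. Since `∑ λᵢ ∇fᵢ(x*) = 0`, the estimate
splits as `g(C) = (m - Y C) + Z C` with `m = ∑ λᵢ wᵢ`, `Y C = ∑_{i ∈ C} θ_C^i λᵢ wᵢ` and
`Z C = ∑_{i ∈ C} θ_C^i λᵢ vᵢ`. Bias correction makes `m` the `p`-mean of `Y`, so the second moment
of `m - Y` is at most that of `Y`; `‖a + b‖² ≤ 2‖a‖² + 2‖b‖²` and Cauchy–Schwarz over each `C`
finish, and exchanging the sums over `C` and `i` in the `v`-term produces the weights `βᵢ`.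
-/

open Finset

section

variable {ι α E : Type*}

theorem norm_add_sq_le_two_mul [SeminormedAddGroup E] (a b : E) :
    ‖a + b‖ ^ 2 ≤ 2 * (‖a‖ ^ 2 + ‖b‖ ^ 2) :=
  (pow_le_pow_left₀ (norm_nonneg _) (norm_add_le a b) 2).trans add_sq_le

theorem norm_sum_smul_sq_le_card_mul [SeminormedAddCommGroup E] [NormedSpace ℝ E]
    (s : Finset ι) (c : ι → ℝ) (u : ι → E) :
    ‖∑ i ∈ s, c i • u i‖ ^ 2 ≤ #s * ∑ i ∈ s, c i ^ 2 * ‖u i‖ ^ 2 := by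
  calc ‖∑ i ∈ s, c i • u i‖ ^ 2 ≤ (∑ i ∈ s, ‖c i • u i‖) ^ 2 :=
        pow_le_pow_left₀ (norm_nonneg _) (norm_sum_le s _) 2
    _ ≤ #s * ∑ i ∈ s, ‖c i • u i‖ ^ 2 := sq_sum_le_card_mul_sum_sq
    _ = #s * ∑ i ∈ s, c i ^ 2 * ‖u i‖ ^ 2 := by
        simp only [norm_smul, mul_pow, Real.norm_eq_abs, sq_abs]

variable [Fintype α]

theorem sum_mul_norm_add_sq_le [SeminormedAddGroup E] (p : α → ℝ) (hp : ∀ a, 0 ≤ p a)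
    (u v : α → E) :
    ∑ a, p a * ‖u a + v a‖ ^ 2 ≤ 2 * (∑ a, p a * ‖u a‖ ^ 2 + ∑ a, p a * ‖v a‖ ^ 2) := by
  rw [← sum_add_distrib, mul_sum]
  refine sum_le_sum fun a _ => ?_
  have := mul_le_mul_of_nonneg_left (norm_add_sq_le_two_mul (u a) (v a)) (hp a)
  linarith

theorem sum_mul_norm_sub_sq_eq [NormedAddCommGroup E] [InnerProductSpace ℝ E]
    (p : α → ℝ) (hp : ∑ a, p a = 1) (Y : α → E) {m : E} (hm : ∑ a, p a • Y a = m) :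
    ∑ a, p a * ‖m - Y a‖ ^ 2 = ∑ a, p a * ‖Y a‖ ^ 2 - ‖m‖ ^ 2 := by
  have hinner : ∑ a, p a * inner ℝ m (Y a) = ‖m‖ ^ 2 := by
    simp_rw [← real_inner_smul_right, ← inner_sum, hm, real_inner_self_eq_norm_sq]
  simp_rw [norm_sub_sq_real, mul_add, mul_sub, sum_add_distrib, sum_sub_distrib, ← sum_mul, hp,
    mul_left_comm _ (2 : ℝ), ← mul_sum, hinner]
  ring

variable [Fintype ι]

theorem sum_mul_norm_sum_smul_sq_le [SeminormedAddCommGroup E] [NormedSpace ℝ E]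
    (p : Finset ι → ℝ) (hp : ∀ C, 0 ≤ p C) (c : Finset ι → ι → ℝ) (u : ι → E) :
    ∑ C : Finset ι, p C * ‖∑ i ∈ C, c C i • u i‖ ^ 2
      ≤ ∑ C : Finset ι, p C * #C * ∑ i ∈ C, c C i ^ 2 * ‖u i‖ ^ 2 :=
  sum_le_sum fun C _ => by
    rw [mul_assoc]
    exact mul_le_mul_of_nonneg_left (norm_sum_smul_sq_le_card_mul _ _ _) (hp C)

variable [DecidableEq ι]

theorem sum_sum_mem_comm {M : Type*} [AddCommMonoid M] (h : Finset ι → ι → M) :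
    ∑ C : Finset ι, ∑ i ∈ C, h C i = ∑ i, ∑ C ∈ univ.filter (fun C => i ∈ C), h C i :=
  Finset.sum_comm' (by simp)

theorem sum_smul_sum_mem_smul_eq_sum [AddCommGroup E] [Module ℝ E]
    (p : Finset ι → ℝ) (θ : Finset ι → ι → ℝ)
    (hθ : ∀ i, ∑ C ∈ univ.filter (fun C => i ∈ C), p C * θ C i = 1) (u : ι → E) :
    ∑ C : Finset ι, p C • ∑ i ∈ C, θ C i • u i = ∑ i, u i := by
  simp_rw [smul_sum, smul_smul]
  rw [sum_sum_mem_comm]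
  simp_rw [← sum_smul, hθ, one_smul]

end

theorem stmt_5_general (n d : ℕ) (f : Fin n → EuclideanSpace ℝ (Fin d) → ℝ)
    (lam : Fin n → ℝ)
    (p : Finset (Fin n) → ℝ) (hp0 : ∀ C, 0 ≤ p C) (hp1 : ∑ C : Finset (Fin n), p C = 1)
    (θ : Finset (Fin n) → Fin n → ℝ)
    (hθ : ∀ i : Fin n, ∑ C ∈ Finset.univ.filter (fun C => i ∈ C), p C * θ C i = 1)
    (β : Fin n → ℝ)
    (hβ : ∀ i, β i = ∑ C ∈ Finset.univ.filter (fun C => i ∈ C),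
        p C * (C.card : ℝ) * (θ C i) ^ 2)
    (x xstar : EuclideanSpace ℝ (Fin d))
    (hxstar : ∑ i, lam i • gradient (f i) xstar = 0)
    (J : Fin n → EuclideanSpace ℝ (Fin d)) :
    ∑ C : Finset (Fin n),
        p C * ‖(∑ i, lam i • J i) + ∑ i ∈ C, (lam i * θ C i) • (gradient (f i) x - J i)‖ ^ 2
      ≤ 2 * (∑ C : Finset (Fin n),
            p C * (C.card : ℝ) *
              ∑ i ∈ C, (θ C i * lam i) ^ 2 * ‖J i - gradient (f i) xstar‖ ^ 2)
        + 2 * ∑ i, β i * (lam i) ^ 2 *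
            ‖gradient (f i) x - gradient (f i) xstar‖ ^ 2 := by
  set w := fun i => J i - gradient (f i) xstar
  set v := fun i => gradient (f i) x - gradient (f i) xstar
  set m := ∑ i, lam i • w i
  have hm : m = ∑ i, lam i • J i := by
    simp only [m, w, smul_sub, sum_sub_distrib, hxstar, sub_zero]
  set Y := fun C : Finset (Fin n) => ∑ i ∈ C, (θ C i * lam i) • w i
  set Z := fun C : Finset (Fin n) => ∑ i ∈ C, (θ C i * lam i) • v i
  have hsplit : ∀ C : Finset (Fin n), (∑ i, lam i • J i)
      + ∑ i ∈ C, (lam i * θ C i) • (gradient (f i) x - J i) = (m - Y C) + Z C := by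
    intro C
    rw [hm, sub_add_eq_add_sub, add_sub_assoc, ← sum_sub_distrib]
    refine congrArg _ (sum_congr rfl fun i _ => ?_)
    rw [mul_comm, ← smul_sub, sub_sub_sub_cancel_right]
  have hmean : ∑ C, p C • Y C = m := by
    simp only [Y, m, mul_smul]
    exact sum_smul_sum_mem_smul_eq_sum p θ hθ _
  have hβsum : ∑ C : Finset (Fin n), p C * #C * ∑ i ∈ C, (θ C i * lam i) ^ 2 * ‖v i‖ ^ 2
      = ∑ i, β i * lam i ^ 2 * ‖v i‖ ^ 2 := by
    simp_rw [mul_sum, sum_sum_mem_comm, hβ, sum_mul]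
    refine sum_congr rfl fun i _ => sum_congr rfl fun C _ => by ring
  calc _ = ∑ C, p C * ‖(m - Y C) + Z C‖ ^ 2 := by simp only [hsplit]
    _ ≤ 2 * (∑ C, p C * ‖m - Y C‖ ^ 2 + ∑ C, p C * ‖Z C‖ ^ 2) :=
        sum_mul_norm_add_sq_le p hp0 _ _
    _ ≤ 2 * (∑ C, p C * ‖Y C‖ ^ 2 + ∑ C, p C * ‖Z C‖ ^ 2) := by
        rw [sum_mul_norm_sub_sq_eq p hp1 Y hmean]
        linarith [sq_nonneg ‖m‖]
    _ ≤ _ := by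
        rw [← hβsum]
        linarith [sum_mul_norm_sum_smul_sq_le p hp0 (fun C i => θ C i * lam i) w,
          sum_mul_norm_sum_smul_sq_le p hp0 (fun C i => θ C i * lam i) v]

/-- second-moment bound for the SAGA-AS gradient estimate. -/
theorem stmt_5 (n d : ℕ) (f : Fin n → EuclideanSpace ℝ (Fin d) → ℝ)
    (hf : ∀ i, Differentiable ℝ (f i))
    (lam : Fin n → ℝ) (hlam : ∀ i, 0 < lam i)
    (p : Finset (Fin n) → ℝ) (hp0 : ∀ C, 0 ≤ p C) (hp1 : ∑ C : Finset (Fin n), p C = 1)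
    (hproper : ∀ i : Fin n, 0 < ∑ C ∈ Finset.univ.filter (fun C => i ∈ C), p C)
    (θ : Finset (Fin n) → Fin n → ℝ)
    (hθ : ∀ i : Fin n, ∑ C ∈ Finset.univ.filter (fun C => i ∈ C), p C * θ C i = 1)
    (β : Fin n → ℝ)
    (hβ : ∀ i, β i = ∑ C ∈ Finset.univ.filter (fun C => i ∈ C),
        p C * (C.card : ℝ) * (θ C i) ^ 2)
    (x xstar : EuclideanSpace ℝ (Fin d))
    (hxstar : ∑ i, lam i • gradient (f i) xstar = 0)
    (J : Fin n → EuclideanSpace ℝ (Fin d)) :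
    ∑ C : Finset (Fin n),
        p C * ‖(∑ i, lam i • J i) + ∑ i ∈ C, (lam i * θ C i) • (gradient (f i) x - J i)‖ ^ 2
      ≤ 2 * (∑ C : Finset (Fin n),
            p C * (C.card : ℝ) *
              ∑ i ∈ C, (θ C i * lam i) ^ 2 * ‖J i - gradient (f i) xstar‖ ^ 2)
        + 2 * ∑ i, β i * (lam i) ^ 2 *
            ‖gradient (f i) x - gradient (f i) xstar‖ ^ 2 :=
  stmt_5_general n d f lam p hp0 hp1 θ hθ β hβ x xstar hxstar J
end

section
/- Let p be a proper sampling on [n], let A_1,…,A_n be real d×m matrices, φ_i : ℝ^m → ℝ differentiable, λ_i > 0, f_i(x) := φ_i(A_i^⊤ x), f := ∑_i λ_i f_i, and let v ∈ ℝ^n with v_i > 0 satisfy the ESO inequality: ∑_{C⊆[n]} p_C ‖∑_{i∈C} A_i h_i‖^2 ≤ ∑_{i=1}^n p_i v_i ‖h_i‖^2 for all h_1,…,h_n ∈ ℝ^m. Let x*, y* ∈ ℝ^d satisfy A_i^⊤ x* = A_i^⊤ y* for all i. Fix x ∈ ℝ^d and a_1,…,a_n ∈ ℝ^m, and define g(C)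 := ∑_{i=1}^n λ_i A_i a_i + ∑_{i∈C} (λ_i/p_i) A_i (∇φ_i(A_i^⊤ x) − a_i). Then ∑_{C⊆[n]} p_C ‖g(C) − ∇f(y*)‖^2 ≤ 2 ∑_{i=1}^n p_i^{-1} v_i λ_i^2 ‖∇φ_i(A_i^⊤ x) − ∇φ_i(A_i^⊤ x*)‖^2 + 2 ∑_{i=1}^n p_i^{-1} v_i λ_i^2 ‖a_i − ∇φ_i(A_i^⊤ x*)‖^2. -/
/-!
Write the estimator minus `∇f(y*)` as `X(C) - (Y(C) - 𝔼Y)`, where `X` and `Y` are the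
importance-weighted sums `∑_{i∈C} p_i⁻¹ A_i (λ_i u_i)` for `u_i = ∇φ_i(A_iᵀx) - ∇φ_i(A_iᵀx*)` and
`u_i = a_i - ∇φ_i(A_iᵀx*)`; this uses `∇f(y*) = ∑ λ_i A_i ∇φ_i(A_iᵀx*)`, valid because
`A_iᵀx* = A_iᵀy*`. Then `‖X - (Y - 𝔼Y)‖² ≤ 2‖X‖² + 2‖Y - 𝔼Y‖²`, the variance of `Y` is at most its
second moment, and the ESO inequality applied to `h_i = p_i⁻¹ λ_i u_i` bounds both second moments.
-/

open Matrix Finset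

section Gradient

variable {E F : Type*} [NormedAddCommGroup E] [InnerProductSpace ℝ E] [CompleteSpace E]
  [NormedAddCommGroup F] [InnerProductSpace ℝ F] [CompleteSpace F]

theorem HasGradientAt.const_mul {f : E → ℝ} {g : E} {x : E} (h : HasGradientAt f g x) (c : ℝ) :
    HasGradientAt (fun z => c * f z) (c • g) x := by
  rw [hasGradientAt_iff_hasFDerivAt] at h ⊢
  refine (h.const_mul c).congr_fderiv ?_
  ext y
  simp

theorem HasGradientAt.fun_sum {ι : Type*} {s : Finset ι} {f : ι → E → ℝ} {g : ι → E} {x : E}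
    (h : ∀ i ∈ s, HasGradientAt (f i) (g i) x) :
    HasGradientAt (fun z => ∑ i ∈ s, f i z) (∑ i ∈ s, g i) x := by
  rw [hasGradientAt_iff_hasFDerivAt, map_sum]
  exact HasFDerivAt.fun_sum fun i hi => (h i hi).hasFDerivAt

theorem HasGradientAt.comp_linearMap [FiniteDimensional ℝ E] [FiniteDimensional ℝ F]
    {φ : F → ℝ} {g : F} (T : E →ₗ[ℝ] F) {z : E} (h : HasGradientAt φ g (T z)) :
    HasGradientAt (fun z => φ (T z)) (LinearMap.adjoint T g) z := by
  rw [hasGradientAt_iff_hasFDerivAt] at h ⊢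
  refine (h.comp z (LinearMap.toContinuousLinearMap T).hasFDerivAt).congr_fderiv ?_
  ext y
  simp [LinearMap.adjoint_inner_left]

end Gradient

theorem Matrix.hasGradientAt_comp_toEuclideanLin_transpose {d m : ℕ}
    (A : Matrix (Fin d) (Fin m) ℝ) {φ : EuclideanSpace ℝ (Fin m) → ℝ}
    {z : EuclideanSpace ℝ (Fin d)} (hφ : DifferentiableAt ℝ φ (toEuclideanLin Aᵀ z)) :
    HasGradientAt (fun z => φ (toEuclideanLin Aᵀ z))
      (toEuclideanLin A (gradient φ (toEuclideanLin Aᵀ z))) z := by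
  have := hφ.hasGradientAt.comp_linearMap (toEuclideanLin Aᵀ)
  rwa [← toEuclideanLin_conjTranspose_eq_adjoint, conjTranspose_eq_transpose_of_trivial,
    transpose_transpose] at this

section Sampling

variable {ι E F : Type*} [Fintype ι]
  [NormedAddCommGroup E] [InnerProductSpace ℝ E] [NormedAddCommGroup F] [InnerProductSpace ℝ F]
  {p : Finset ι → ℝ} {pI : ι → ℝ}

theorem sum_smul_sum_mem_eq_sum_smul [DecidableEq ι]
    (hpI : ∀ i, pI i = ∑ C ∈ univ.filter (fun C => i ∈ C), p C) (y : ι → F) :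
    ∑ C, p C • ∑ i ∈ C, y i = ∑ i, pI i • y i := by
  simp_rw [hpI, sum_smul, sum_filter]
  rw [sum_comm]
  simp_rw [smul_sum, sum_ite_mem, univ_inter]

theorem sum_mul_norm_sub_sq_le {κ : Type*} [Fintype κ] {q : κ → ℝ} (hq : ∑ k, q k = 1)
    (Z : κ → F) : ∑ k, q k * ‖Z k - ∑ l, q l • Z l‖ ^ 2 ≤ ∑ k, q k * ‖Z k‖ ^ 2 := by
  obtain ⟨W, hW⟩ : ∃ W, W = ∑ l, q l • Z l := ⟨_, rfl⟩
  rw [← hW]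
  have hinner : ∑ k, q k * inner ℝ (Z k) W = ‖W‖ ^ 2 := by
    simp_rw [← real_inner_smul_left, ← sum_inner, ← hW, real_inner_self_eq_norm_sq]
  have expand (k : κ) : q k * ‖Z k - W‖ ^ 2
      = q k * ‖Z k‖ ^ 2 - 2 * (q k * inner ℝ (Z k) W) + q k * ‖W‖ ^ 2 := by
    rw [norm_sub_sq_real]; ring
  calc ∑ k, q k * ‖Z k - W‖ ^ 2
      = ∑ k, q k * ‖Z k‖ ^ 2 - 2 * ∑ k, q k * inner ℝ (Z k) W + (∑ k, q k) * ‖W‖ ^ 2 := by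
        simp_rw [expand]
        rw [sum_add_distrib, sum_sub_distrib, ← mul_sum, ← sum_mul]
    _ = ∑ k, q k * ‖Z k‖ ^ 2 - ‖W‖ ^ 2 := by rw [hinner, hq]; ring
    _ ≤ ∑ k, q k * ‖Z k‖ ^ 2 := sub_le_self _ (sq_nonneg _)

theorem sum_mul_norm_sq_sum_inv_smul_le {v : ι → ℝ} {B : ι → E →ₗ[ℝ] F}
    (hproper : ∀ i, 0 < pI i)
    (hESO : ∀ h : ι → E, ∑ C, p C * ‖∑ i ∈ C, B i (h i)‖ ^ 2 ≤ ∑ i, pI i * v i * ‖h i‖ ^ 2)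
    (h : ι → E) :
    ∑ C, p C * ‖∑ i ∈ C, (pI i)⁻¹ • B i (h i)‖ ^ 2 ≤ ∑ i, (pI i)⁻¹ * v i * ‖h i‖ ^ 2 := by
  refine ((hESO fun i => (pI i)⁻¹ • h i).trans_eq (sum_congr rfl fun i _ => ?_)).trans_eq' ?_
  · have := (hproper i).ne'
    rw [norm_smul, mul_pow, Real.norm_eq_abs, sq_abs]
    field_simp
  · simp_rw [map_smul]

theorem sum_mul_norm_sq_sampled_sub_le [DecidableEq ι] {v : ι → ℝ} {B : ι → E →ₗ[ℝ] F}
    (hp0 : ∀ C, 0 ≤ p C) (hp1 : ∑ C, p C = 1)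
    (hpI : ∀ i, pI i = ∑ C ∈ univ.filter (fun C => i ∈ C), p C) (hproper : ∀ i, 0 < pI i)
    (hESO : ∀ h : ι → E, ∑ C, p C * ‖∑ i ∈ C, B i (h i)‖ ^ 2 ≤ ∑ i, pI i * v i * ‖h i‖ ^ 2)
    (u w : ι → E) :
    ∑ C, p C * ‖∑ i ∈ C, (pI i)⁻¹ • B i (u i)
        - (∑ i ∈ C, (pI i)⁻¹ • B i (w i) - ∑ i, B i (w i))‖ ^ 2
      ≤ 2 * ∑ i, (pI i)⁻¹ * v i * ‖u i‖ ^ 2 + 2 * ∑ i, (pI i)⁻¹ * v i * ‖w i‖ ^ 2 := by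
  have hmean : ∑ C, p C • ∑ i ∈ C, (pI i)⁻¹ • B i (w i) = ∑ i, B i (w i) := by
    simp_rw [sum_smul_sum_mem_eq_sum_smul hpI, smul_smul, mul_inv_cancel₀ (hproper _).ne',
      one_smul]
  have hvar := sum_mul_norm_sub_sq_le hp1 fun C => ∑ i ∈ C, (pI i)⁻¹ • B i (w i)
  rw [hmean] at hvar
  have hsplit (a b : F) (C : Finset ι) :
      p C * ‖a - b‖ ^ 2 ≤ 2 * (p C * ‖a‖ ^ 2) + 2 * (p C * ‖b‖ ^ 2) := by
    have := mul_le_mul_of_nonneg_left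
      ((pow_le_pow_left₀ (norm_nonneg _) (norm_sub_le a b) 2).trans add_sq_le) (hp0 C)
    linarith
  refine (sum_le_sum fun C _ => hsplit _ _ C).trans ?_
  rw [sum_add_distrib, ← mul_sum, ← mul_sum]
  linarith [sum_mul_norm_sq_sum_inv_smul_le hproper hESO u,
    sum_mul_norm_sq_sum_inv_smul_le hproper hESO w]

end Sampling

theorem stmt_12_general (n d m : ℕ)
    (p : Finset (Fin n) → ℝ) (hp0 : ∀ C, 0 ≤ p C) (hp1 : ∑ C : Finset (Fin n), p C = 1)
    (pI : Fin n → ℝ) (hpI : ∀ i, pI i = ∑ C ∈ Finset.univ.filter (fun C => i ∈ C), p C)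
    (hproper : ∀ i, 0 < pI i)
    (A : Fin n → Matrix (Fin d) (Fin m) ℝ)
    (φ : Fin n → EuclideanSpace ℝ (Fin m) → ℝ)
    (hdiff : ∀ i, Differentiable ℝ (φ i))
    (lam : Fin n → ℝ)
    (F : EuclideanSpace ℝ (Fin d) → ℝ)
    (hF : ∀ z, F z = ∑ i, lam i * φ i (Matrix.toEuclideanLin (A i)ᵀ z))
    (v : Fin n → ℝ)
    (hESO : ∀ h : Fin n → EuclideanSpace ℝ (Fin m),
        ∑ C : Finset (Fin n), p C * ‖∑ i ∈ C, Matrix.toEuclideanLin (A i) (h i)‖ ^ 2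
          ≤ ∑ i, pI i * v i * ‖h i‖ ^ 2)
    (xstar ystar : EuclideanSpace ℝ (Fin d))
    (hns : ∀ i, Matrix.toEuclideanLin (A i)ᵀ xstar = Matrix.toEuclideanLin (A i)ᵀ ystar)
    (x : EuclideanSpace ℝ (Fin d)) (a : Fin n → EuclideanSpace ℝ (Fin m)) :
    ∑ C : Finset (Fin n), p C *
        ‖((∑ i, lam i • Matrix.toEuclideanLin (A i) (a i))
            + ∑ i ∈ C, (lam i / pI i) •
                Matrix.toEuclideanLin (A i)
                  (gradient (φ i) (Matrix.toEuclideanLin (A i)ᵀ x) - a i))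
          - gradient F ystar‖ ^ 2
      ≤ 2 * (∑ i, (pI i)⁻¹ * v i * lam i ^ 2 *
            ‖gradient (φ i) (Matrix.toEuclideanLin (A i)ᵀ x)
              - gradient (φ i) (Matrix.toEuclideanLin (A i)ᵀ xstar)‖ ^ 2)
        + 2 * ∑ i, (pI i)⁻¹ * v i * lam i ^ 2 *
            ‖a i - gradient (φ i) (Matrix.toEuclideanLin (A i)ᵀ xstar)‖ ^ 2 := by
  set B := fun i => toEuclideanLin (A i)
  set gx := fun i => gradient (φ i) (toEuclideanLin (A i)ᵀ x)
  set gstar := fun i => gradient (φ i) (toEuclideanLin (A i)ᵀ xstar)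
  have hgradF : gradient F ystar = ∑ i, lam i • B i (gstar i) := by
    simp_rw [funext hF, B, gstar, hns]
    exact (HasGradientAt.fun_sum fun i _ =>
      ((A i).hasGradientAt_comp_toEuclideanLin_transpose (hdiff i _)).const_mul (lam i)).gradient
  have hestimator (C : Finset (Fin n)) :
      (∑ i, lam i • B i (a i)) + ∑ i ∈ C, (lam i / pI i) • B i (gx i - a i) - gradient F ystar
        = ∑ i ∈ C, (pI i)⁻¹ • B i (lam i • (gx i - gstar i))
          - (∑ i ∈ C, (pI i)⁻¹ • B i (lam i • (a i - gstar i))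
            - ∑ i, B i (lam i • (a i - gstar i))) := by
    simp only [hgradF, map_smul, map_sub, smul_sub, smul_smul, sum_sub_distrib, div_eq_inv_mul]
    abel
  have hnorm_smul_sq (c : ℝ) (y : EuclideanSpace ℝ (Fin m)) : ‖c • y‖ ^ 2 = c ^ 2 * ‖y‖ ^ 2 := by
    rw [norm_smul, mul_pow, Real.norm_eq_abs, sq_abs]
  refine (sum_congr rfl fun C _ => congrArg (fun y => p C * ‖y‖ ^ 2) (hestimator C)).trans_le ?_
  refine (sum_mul_norm_sq_sampled_sub_le hp0 hp1 hpI hproper hESO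
    (fun i => lam i • (gx i - gstar i)) (fun i => lam i • (a i - gstar i))).trans_eq ?_
  simp_rw [hnorm_smul_sq, ← mul_assoc]
  rfl

/-- variance bound `E‖g − ∇f(y*)‖²` for the SAGA-AS gradient
estimate in the composite case, under the ESO inequality. -/
theorem stmt_12 (n d m : ℕ)
    (p : Finset (Fin n) → ℝ) (hp0 : ∀ C, 0 ≤ p C) (hp1 : ∑ C : Finset (Fin n), p C = 1)
    (pI : Fin n → ℝ) (hpI : ∀ i, pI i = ∑ C ∈ Finset.univ.filter (fun C => i ∈ C), p C)
    (hproper : ∀ i, 0 < pI i)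
    (A : Fin n → Matrix (Fin d) (Fin m) ℝ)
    (φ : Fin n → EuclideanSpace ℝ (Fin m) → ℝ)
    (hdiff : ∀ i, Differentiable ℝ (φ i))
    (lam : Fin n → ℝ) (hlam : ∀ i, 0 < lam i)
    (F : EuclideanSpace ℝ (Fin d) → ℝ)
    (hF : ∀ z, F z = ∑ i, lam i * φ i (Matrix.toEuclideanLin (A i)ᵀ z))
    (v : Fin n → ℝ) (hv : ∀ i, 0 < v i)
    (hESO : ∀ h : Fin n → EuclideanSpace ℝ (Fin m),
        ∑ C : Finset (Fin n), p C * ‖∑ i ∈ C, Matrix.toEuclideanLin (A i) (h i)‖ ^ 2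
          ≤ ∑ i, pI i * v i * ‖h i‖ ^ 2)
    (xstar ystar : EuclideanSpace ℝ (Fin d))
    (hns : ∀ i, Matrix.toEuclideanLin (A i)ᵀ xstar = Matrix.toEuclideanLin (A i)ᵀ ystar)
    (x : EuclideanSpace ℝ (Fin d)) (a : Fin n → EuclideanSpace ℝ (Fin m)) :
    ∑ C : Finset (Fin n), p C *
        ‖((∑ i, lam i • Matrix.toEuclideanLin (A i) (a i))
            + ∑ i ∈ C, (lam i / pI i) •
                Matrix.toEuclideanLin (A i)
                  (gradient (φ i) (Matrix.toEuclideanLin (A i)ᵀ x) - a i))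
          - gradient F ystar‖ ^ 2
      ≤ 2 * (∑ i, (pI i)⁻¹ * v i * lam i ^ 2 *
            ‖gradient (φ i) (Matrix.toEuclideanLin (A i)ᵀ x)
              - gradient (φ i) (Matrix.toEuclideanLin (A i)ᵀ xstar)‖ ^ 2)
        + 2 * ∑ i, (pI i)⁻¹ * v i * lam i ^ 2 *
            ‖a i - gradient (φ i) (Matrix.toEuclideanLin (A i)ᵀ xstar)‖ ^ 2 :=
  stmt_12_general n d m p hp0 hp1 pI hpI hproper A φ hdiff lam F hF v hESO xstar ystar hns x a
end

section
/- Let p be a proper sampling on [n], let A_1,…,A_n be real d×m matrices, φ_i : ℝ^m → ℝ differentiable, λ_i > 0, f_i(x) := φ_i(A_i^⊤ x), f := ∑_i λ_i f_i, and let v ∈ ℝ^n with v_i > 0 satisfy the ESO inequality: ∑_{C⊆[n]} p_C ‖∑_{i∈C} A_i h_i‖^2 ≤ ∑_{i=1}^n p_i v_i ‖h_i‖^2 for all h_1,…,h_n ∈ ℝ^m. Fix x, x* ∈ ℝ^d and a_1,…,a_n ∈ ℝ^m, and define g(C) := ∑_{i=1}^n λ_i A_i a_i + ∑_{i∈C}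 (λ_i/p_i) A_i (∇φ_i(A_i^⊤ x) − a_i). Then ∑_{C⊆[n]} p_C ‖g(C) − ∇f(x)‖^2 ≤ 2 ∑_{i=1}^n p_i^{-1} v_i λ_i^2 ‖∇φ_i(A_i^⊤ x) − ∇φ_i(A_i^⊤ x*)‖^2 + 2 ∑_{i=1}^n p_i^{-1} v_i λ_i^2 ‖a_i − ∇φ_i(A_i^⊤ x*)‖^2. -/
/-!
Put `h i := (λ i / p i) • (∇φ_i(A_iᵀ x) - a i)` and `X C := ∑ i ∈ C, A_i h_i`. Swapping the sums
over `C` and `i` gives `E[X] = ∑ i, p_i • A_i h_i = ∑ i, λ_i • A_i (∇φ_i(A_iᵀ x) - a_i)`, so the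
estimator minus `∇f(x)` is exactly `X C - E[X]`. Its second moment is at most `E‖X‖²`, which the
ESO inequality bounds by `∑ i, p_i v_i ‖h_i‖²`; inserting `∇φ_i(A_iᵀ x*)` through
`‖u - w‖² ≤ 2‖u - c‖² + 2‖w - c‖²` splits this into the two sums of the bound.
-/

open Matrix Finset

section Gradient

variable {E F : Type*} [NormedAddCommGroup E] [InnerProductSpace ℝ E]
  [NormedAddCommGroup F] [InnerProductSpace ℝ F]

theorem HasGradientAt.comp_linearMap_s13 [FiniteDimensional ℝ E] [FiniteDimensional ℝ F]
    {φ : F → ℝ} {g : F} {x : E} (L : E →ₗ[ℝ] F) (h : HasGradientAt φ g (L x)) :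
    HasGradientAt (φ ∘ L) (L.adjoint g) x := by
  rw [hasGradientAt_iff_hasFDerivAt] at h ⊢
  refine (h.comp x L.toContinuousLinearMap.hasFDerivAt).congr_fderiv ?_
  ext y
  simp [LinearMap.adjoint_inner_left]

theorem HasGradientAt.fun_sum_const_mul [CompleteSpace E] {ι : Type*} (s : Finset ι)
    {f : ι → E → ℝ} {g : ι → E} {x : E} (c : ι → ℝ) (h : ∀ i ∈ s, HasGradientAt (f i) (g i) x) :
    HasGradientAt (fun z => ∑ i ∈ s, c i * f i z) (∑ i ∈ s, c i • g i) x := by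
  simp only [hasGradientAt_iff_hasFDerivAt, map_sum, map_smul] at h ⊢
  exact HasFDerivAt.fun_sum fun i hi => (h i hi).const_mul (c i)

end Gradient

theorem Matrix.toEuclideanLin_eq_adjoint_toEuclideanLin_transpose {m n : Type*} [Fintype m]
    [Fintype n] [DecidableEq m] [DecidableEq n] (A : Matrix m n ℝ) :
    toEuclideanLin A = (toEuclideanLin Aᵀ).adjoint := by
  rw [← toEuclideanLin_conjTranspose_eq_adjoint, conjTranspose_eq_transpose_of_trivial,
    transpose_transpose]

theorem gradient_sum_mul_comp_toEuclideanLin_transpose {ι : Type*} {d m : ℕ} (s : Finset ι)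
    (lam : ι → ℝ) (A : ι → Matrix (Fin d) (Fin m) ℝ)
    {φ : ι → EuclideanSpace ℝ (Fin m) → ℝ} (hφ : ∀ i, Differentiable ℝ (φ i))
    (x : EuclideanSpace ℝ (Fin d)) :
    gradient (fun z => ∑ i ∈ s, lam i * φ i (toEuclideanLin (A i)ᵀ z)) x
      = ∑ i ∈ s, lam i • toEuclideanLin (A i) (gradient (φ i) (toEuclideanLin (A i)ᵀ x)) := by
  simp only [toEuclideanLin_eq_adjoint_toEuclideanLin_transpose (A _)]
  exact (HasGradientAt.fun_sum_const_mul s lam fun i _ =>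
    (hφ i _).hasGradientAt.comp_linearMap_s13 _).gradient

section Variance

variable {ι E : Type*} [Fintype ι] [NormedAddCommGroup E] [InnerProductSpace ℝ E]
  {w : ι → ℝ}

theorem sum_mul_norm_sub_sum_smul_sq (hw : ∑ i, w i = 1) (X : ι → E) :
    ∑ i, w i * ‖X i - ∑ j, w j • X j‖ ^ 2 = ∑ i, w i * ‖X i‖ ^ 2 - ‖∑ j, w j • X j‖ ^ 2 := by
  set μ := ∑ j, w j • X j
  have hcross : ∑ i, w i * inner ℝ (X i) μ = ‖μ‖ ^ 2 := by
    simp only [← real_inner_smul_left, ← sum_inner, real_inner_self_eq_norm_sq, μ]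
  have hexpand : ∀ i, w i * ‖X i - μ‖ ^ 2
      = w i * ‖X i‖ ^ 2 - 2 * (w i * inner ℝ (X i) μ) + w i * ‖μ‖ ^ 2 := by
    intro i
    rw [norm_sub_sq_real]
    ring
  simp only [hexpand, sum_add_distrib, sum_sub_distrib, ← mul_sum, ← sum_mul, hcross, hw]
  ring

theorem sum_mul_norm_sub_sum_smul_sq_le (hw : ∑ i, w i = 1) (X : ι → E) :
    ∑ i, w i * ‖X i - ∑ j, w j • X j‖ ^ 2 ≤ ∑ i, w i * ‖X i‖ ^ 2 := by
  rw [sum_mul_norm_sub_sum_smul_sq hw]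
  exact sub_le_self _ (sq_nonneg _)

end Variance

theorem sum_smul_sum_mem_eq_sum_sum_filter_smul {α M : Type*} [Fintype α] [DecidableEq α]
    [AddCommMonoid M] [Module ℝ M] (p : Finset α → ℝ) (y : α → M) :
    ∑ C, p C • ∑ i ∈ C, y i = ∑ i, (∑ C ∈ univ.filter (fun C => i ∈ C), p C) • y i := by
  calc ∑ C, p C • ∑ i ∈ C, y i = ∑ C, ∑ i, if i ∈ C then p C • y i else 0 := by
        simp only [smul_sum, sum_ite_mem, univ_inter]
    _ = _ := by
        rw [sum_comm]
        simp only [sum_filter, sum_smul, ite_smul, zero_smul]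

theorem norm_sub_sq_le_two_mul_add {E : Type*} [SeminormedAddCommGroup E] (a b c : E) :
    ‖a - b‖ ^ 2 ≤ 2 * ‖a - c‖ ^ 2 + 2 * ‖b - c‖ ^ 2 := by
  calc ‖a - b‖ ^ 2 ≤ (‖a - c‖ + ‖b - c‖) ^ 2 := by
        gcongr
        simpa using norm_sub_le (a - c) (b - c)
    _ ≤ _ := by linarith [add_sq_le (a := ‖a - c‖) (b := ‖b - c‖)]

theorem mul_mul_norm_div_smul_sub_sq_le {E : Type*} [SeminormedAddCommGroup E] [NormedSpace ℝ E]
    {p v : ℝ} (hp : 0 < p) (hv : 0 ≤ v) (l : ℝ) (u a c : E) :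
    p * v * ‖(l / p) • (u - a)‖ ^ 2 ≤ p⁻¹ * v * l ^ 2 * (2 * ‖u - c‖ ^ 2 + 2 * ‖a - c‖ ^ 2) := by
  have hscale : p * v * ‖(l / p) • (u - a)‖ ^ 2 = p⁻¹ * v * l ^ 2 * ‖u - a‖ ^ 2 := by
    rw [norm_smul, mul_pow, Real.norm_eq_abs, sq_abs]
    field_simp
  rw [hscale]
  gcongr
  exact norm_sub_sq_le_two_mul_add u a c

theorem stmt_13_general (n d m : ℕ)
    (p : Finset (Fin n) → ℝ) (hp1 : ∑ C : Finset (Fin n), p C = 1)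
    (pI : Fin n → ℝ) (hpI : ∀ i, pI i = ∑ C ∈ Finset.univ.filter (fun C => i ∈ C), p C)
    (hproper : ∀ i, 0 < pI i)
    (A : Fin n → Matrix (Fin d) (Fin m) ℝ)
    (φ : Fin n → EuclideanSpace ℝ (Fin m) → ℝ)
    (hdiff : ∀ i, Differentiable ℝ (φ i))
    (lam : Fin n → ℝ)
    (F : EuclideanSpace ℝ (Fin d) → ℝ)
    (hF : ∀ z, F z = ∑ i, lam i * φ i (Matrix.toEuclideanLin (A i)ᵀ z))
    (v : Fin n → ℝ) (hv : ∀ i, 0 < v i)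
    (hESO : ∀ h : Fin n → EuclideanSpace ℝ (Fin m),
        ∑ C : Finset (Fin n), p C * ‖∑ i ∈ C, Matrix.toEuclideanLin (A i) (h i)‖ ^ 2
          ≤ ∑ i, pI i * v i * ‖h i‖ ^ 2)
    (x xstar : EuclideanSpace ℝ (Fin d)) (a : Fin n → EuclideanSpace ℝ (Fin m)) :
    ∑ C : Finset (Fin n), p C *
        ‖((∑ i, lam i • Matrix.toEuclideanLin (A i) (a i))
            + ∑ i ∈ C, (lam i / pI i) •
                Matrix.toEuclideanLin (A i)
                  (gradient (φ i) (Matrix.toEuclideanLin (A i)ᵀ x) - a i))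
          - gradient F x‖ ^ 2
      ≤ 2 * (∑ i, (pI i)⁻¹ * v i * lam i ^ 2 *
            ‖gradient (φ i) (Matrix.toEuclideanLin (A i)ᵀ x)
              - gradient (φ i) (Matrix.toEuclideanLin (A i)ᵀ xstar)‖ ^ 2)
        + 2 * ∑ i, (pI i)⁻¹ * v i * lam i ^ 2 *
            ‖a i - gradient (φ i) (Matrix.toEuclideanLin (A i)ᵀ xstar)‖ ^ 2 := by
  set G := fun i => gradient (φ i) (toEuclideanLin (A i)ᵀ x)
  set Gs := fun i => gradient (φ i) (toEuclideanLin (A i)ᵀ xstar)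
  set h := fun i => (lam i / pI i) • (G i - a i)
  set X := fun C : Finset (Fin n) => ∑ i ∈ C, toEuclideanLin (A i) (h i)
  have hmean : ∑ C, p C • X C = ∑ i, lam i • toEuclideanLin (A i) (G i - a i) := by
    simp only [X, sum_smul_sum_mem_eq_sum_sum_filter_smul, ← hpI, h, map_smul, smul_smul,
      mul_div_cancel₀ _ (hproper _).ne']
  have hgrad : gradient F x = ∑ i, lam i • toEuclideanLin (A i) (G i) := by
    rw [show F = _ from funext hF, gradient_sum_mul_comp_toEuclideanLin_transpose _ _ _ hdiff]
  have hcentered : ∀ C, (∑ i, lam i • toEuclideanLin (A i) (a i))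
      + ∑ i ∈ C, (lam i / pI i) • toEuclideanLin (A i) (G i - a i) - gradient F x
        = X C - ∑ D, p D • X D := by
    intro C
    rw [hmean, hgrad]
    simp only [X, h, map_smul, map_sub, smul_sub, sum_sub_distrib]
    abel
  calc _ = ∑ C, p C * ‖X C - ∑ D, p D • X D‖ ^ 2 :=
        sum_congr rfl fun C _ => congrArg (fun y => p C * ‖y‖ ^ 2) (hcentered C)
    _ ≤ ∑ C, p C * ‖X C‖ ^ 2 := sum_mul_norm_sub_sum_smul_sq_le hp1 X
    _ ≤ ∑ i, pI i * v i * ‖h i‖ ^ 2 := hESO h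
    _ ≤ ∑ i, (pI i)⁻¹ * v i * lam i ^ 2 * (2 * ‖G i - Gs i‖ ^ 2 + 2 * ‖a i - Gs i‖ ^ 2) :=
        sum_le_sum fun i _ =>
          mul_mul_norm_div_smul_sub_sq_le (hproper i) (hv i).le (lam i) (G i) (a i) (Gs i)
    _ = _ := by
        simp only [mul_sum, ← sum_add_distrib]
        exact sum_congr rfl fun i _ => by ring

/-- variance bound `E‖g − ∇f(x)‖²` for the SAGA-AS gradient
estimate in the composite case, under the ESO inequality. -/
theorem stmt_13 (n d m : ℕ)
    (p : Finset (Fin n) → ℝ) (hp0 : ∀ C, 0 ≤ p C) (hp1 : ∑ C : Finset (Fin n), p C = 1)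
    (pI : Fin n → ℝ) (hpI : ∀ i, pI i = ∑ C ∈ Finset.univ.filter (fun C => i ∈ C), p C)
    (hproper : ∀ i, 0 < pI i)
    (A : Fin n → Matrix (Fin d) (Fin m) ℝ)
    (φ : Fin n → EuclideanSpace ℝ (Fin m) → ℝ)
    (hdiff : ∀ i, Differentiable ℝ (φ i))
    (lam : Fin n → ℝ) (hlam : ∀ i, 0 < lam i)
    (F : EuclideanSpace ℝ (Fin d) → ℝ)
    (hF : ∀ z, F z = ∑ i, lam i * φ i (Matrix.toEuclideanLin (A i)ᵀ z))
    (v : Fin n → ℝ) (hv : ∀ i, 0 < v i)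
    (hESO : ∀ h : Fin n → EuclideanSpace ℝ (Fin m),
        ∑ C : Finset (Fin n), p C * ‖∑ i ∈ C, Matrix.toEuclideanLin (A i) (h i)‖ ^ 2
          ≤ ∑ i, pI i * v i * ‖h i‖ ^ 2)
    (x xstar : EuclideanSpace ℝ (Fin d)) (a : Fin n → EuclideanSpace ℝ (Fin m)) :
    ∑ C : Finset (Fin n), p C *
        ‖((∑ i, lam i • Matrix.toEuclideanLin (A i) (a i))
            + ∑ i ∈ C, (lam i / pI i) •
                Matrix.toEuclideanLin (A i)
                  (gradient (φ i) (Matrix.toEuclideanLin (A i)ᵀ x) - a i))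
          - gradient F x‖ ^ 2
      ≤ 2 * (∑ i, (pI i)⁻¹ * v i * lam i ^ 2 *
            ‖gradient (φ i) (Matrix.toEuclideanLin (A i)ᵀ x)
              - gradient (φ i) (Matrix.toEuclideanLin (A i)ᵀ xstar)‖ ^ 2)
        + 2 * ∑ i, (pI i)⁻¹ * v i * lam i ^ 2 *
            ‖a i - gradient (φ i) (Matrix.toEuclideanLin (A i)ᵀ xstar)‖ ^ 2 :=
  stmt_13_general n d m p hp1 pI hpI hproper A φ hdiff lam F hF v hv hESO x xstar a
end

section
/- Let c_1,…,c_n > 0 and let τ be a real number with 0 < τ ≤ n. Define q_i := τ c_i / ∑_{j=1}^n c_j and suppose q_i ≤ 1 for all i ∈ [n]. Then for every vector p ∈ ℝ^n with 0 < p_i ≤ 1 for all i and ∑_{i=1}^n p_i = τ, one has max_{1≤i≤n} c_i/p_i ≥ (∑_{j=1}^n c_j)/τ, and equality holds for p = q. That is, the probabilities q_i minimize the worst-case ratio max_i c_i/p_i among all probability assignments with expected minibatch size τ. -/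
/-!
Since `c i ≤ (max_j c j / p j) * p i` for every `i`, summing over `i` gives
`∑ c ≤ (max_j c j / p j) * τ`. For `p = q` every ratio `c i / q i` equals `(∑ c) / τ`,
so the bound is attained.
-/

theorem Finset.sum_le_sup'_div_mul_sum {ι 𝕜 : Type*} [Field 𝕜] [LinearOrder 𝕜]
    [IsStrictOrderedRing 𝕜] (s : Finset ι) (hs : s.Nonempty) (c p : ι → 𝕜)
    (hp : ∀ i ∈ s, 0 < p i) :
    ∑ i ∈ s, c i ≤ s.sup' hs (fun i => c i / p i) * ∑ i ∈ s, p i := by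
  rw [Finset.mul_sum]
  refine Finset.sum_le_sum fun i hi => ?_
  calc c i = c i / p i * p i := (div_mul_cancel₀ _ (hp i hi).ne').symm
    _ ≤ s.sup' hs (fun i => c i / p i) * p i :=
      mul_le_mul_of_nonneg_right (Finset.le_sup' (fun i => c i / p i) hi) (hp i hi).le

theorem stmt_19_general (n : ℕ) (hn : 0 < n) (c : Fin n → ℝ) (hc : ∀ i, 0 < c i)
    (τ : ℝ) (hτ0 : 0 < τ)
    (q : Fin n → ℝ) (hq : ∀ i, q i = τ * c i / ∑ j, c j) :
    (∀ p : Fin n → ℝ, (∀ i, 0 < p i) → (∀ i, p i ≤ 1) → (∑ i, p i = τ) →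
        (∑ j, c j) / τ ≤
          Finset.univ.sup' ⟨⟨0, hn⟩, Finset.mem_univ _⟩ (fun i => c i / p i))
    ∧ Finset.univ.sup' ⟨⟨0, hn⟩, Finset.mem_univ _⟩ (fun i => c i / q i)
        = (∑ j, c j) / τ := by
  refine ⟨fun p hp _ hpτ => ?_, ?_⟩
  · rw [div_le_iff₀ hτ0, ← hpτ]
    exact Finset.sum_le_sup'_div_mul_sum _ _ c p fun i _ => hp i
  · have hS : 0 < ∑ j, c j := Finset.sum_pos (fun i _ => hc i) ⟨⟨0, hn⟩, Finset.mem_univ _⟩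
    have hratio : ∀ i, c i / q i = (∑ j, c j) / τ := fun i => by
      rw [hq i]
      field_simp [(hc i).ne']
    exact (Finset.sup'_congr _ rfl fun i _ => hratio i).trans (Finset.sup'_const _ _)

/-- optimality of the importance-sampling probabilities
`q_i = τ c_i / ∑ c_j` for minimizing `max_i c_i / p_i` subject to
`∑ p_i = τ`, `0 < p_i ≤ 1`. -/
theorem stmt_19 (n : ℕ) (hn : 0 < n) (c : Fin n → ℝ) (hc : ∀ i, 0 < c i)
    (τ : ℝ) (hτ0 : 0 < τ) (hτn : τ ≤ (n : ℝ))
    (q : Fin n → ℝ) (hq : ∀ i, q i = τ * c i / ∑ j, c j)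
    (hq1 : ∀ i, q i ≤ 1) :
    (∀ p : Fin n → ℝ, (∀ i, 0 < p i) → (∀ i, p i ≤ 1) → (∑ i, p i = τ) →
        (∑ j, c j) / τ ≤
          Finset.univ.sup' ⟨⟨0, hn⟩, Finset.mem_univ _⟩ (fun i => c i / p i))
    ∧ Finset.univ.sup' ⟨⟨0, hn⟩, Finset.mem_univ _⟩ (fun i => c i / q i)
        = (∑ j, c j) / τ :=
  stmt_19_general n hn c hc τ hτ0 q hq
end
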